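/- Let m, n ≥ 3 and let B_{m,n} = K_1 ∨ (P_{m-1} ∪ P_{n-1}) be the bow graph with apex c. The visibility polynomial of B_{m,n} is V(B_{m,n})(x) = (1+x)^{m+n-2} + x + (m+n-2)x^2 + (2m+2n-10)x^3. -/

import Mathlib

open SimpleGraph Polynomial

/-- Two vertices `u` and `v` are `X`-visible in `G` if some shortest `u`–`v` path
has no internal vertex in `X`, i.e. its support meets `X` only possibly in `{u, v}`. -/
def XVisible {V : Type*} (G : SimpleGraph V) (X : Set V) (u v : V) : Prop :=
  ∃ p : G.Walk u v, p.IsPath ∧ p.length = G.dist u v ∧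
    ∀ w ∈ p.support, w ∈ X → w = u ∨ w = v

/-- `X` is a mutual-visibility set of `G` if every pair of vertices of `X` is `X`-visible. -/
def MutualVisibilitySet {V : Type*} (G : SimpleGraph V) (X : Set V) : Prop :=
  ∀ u ∈ X, ∀ v ∈ X, XVisible G X u v

open Classical in
/-- The visibility polynomial: `∑ m_k x^k` where `m_k` is the number of
mutual-visibility sets of cardinality `k`. -/
noncomputable def visPoly {V : Type*} [Fintype V] (G : SimpleGraph V) : Polynomial ℕ :=
  ∑ S ∈ Finset.univ.powerset.filter (fun S : Finset V => MutualVisibilitySet G ↑S),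
    Polynomial.X ^ S.card

/-- The wheel graph with rim `cycleGraph m` (on `some`-vertices) and hub `none`. -/
def wheelGraph (m : ℕ) : SimpleGraph (Option (Fin m)) :=
  SimpleGraph.fromRel (fun u v =>
    (u = none ∧ v ≠ none) ∨
    ∃ i j : Fin m, u = some i ∧ v = some j ∧ (SimpleGraph.cycleGraph m).Adj i j)

/-- The shell graph with path `pathGraph m` (on `some`-vertices) and apex `none`. -/
def shellGraph (m : ℕ) : SimpleGraph (Option (Fin m)) :=
  SimpleGraph.fromRel (fun u v =>
    (u = none ∧ v ≠ none) ∨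
    ∃ i j : Fin m, u = some i ∧ v = some j ∧ (SimpleGraph.pathGraph m).Adj i j)

/-- The bow graph: apex `none` joined to two disjoint paths of `a` and `b` vertices. -/
def bowGraph (a b : ℕ) : SimpleGraph (Option (Fin a ⊕ Fin b)) :=
  SimpleGraph.fromRel (fun u v =>
    (u = none ∧ v ≠ none) ∨
    (∃ i j : Fin a, u = some (Sum.inl i) ∧ v = some (Sum.inl j) ∧ (SimpleGraph.pathGraph a).Adj i j) ∨
    (∃ i j : Fin b, u = some (Sum.inr i) ∧ v = some (Sum.inr j) ∧ (SimpleGraph.pathGraph b).Adj i j))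

/-- The friendship graph: center `none`; the `i`-th triangle has the two
noncentral vertices `some (i, 0)` and `some (i, 1)`. -/
def friendshipGraph (n : ℕ) : SimpleGraph (Option (Fin n × Fin 2)) :=
  SimpleGraph.fromRel (fun u v =>
    (u = none ∧ v ≠ none) ∨
    ∃ (i : Fin n) (x y : Fin 2), u = some (i, x) ∧ v = some (i, y) ∧ x ≠ y)

/-- The helm graph: a copy of the wheel (the `Sum.inl`-vertices) together with a
pendant vertex `Sum.inr k` attached to each rim vertex `Sum.inl (some k)`. -/
def helmGraph (m : ℕ) : SimpleGraph (Option (Fin m) ⊕ Fin m) :=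
  SimpleGraph.fromRel (fun u v =>
    (∃ x y : Option (Fin m), u = Sum.inl x ∧ v = Sum.inl y ∧ (wheelGraph m).Adj x y) ∨
    (∃ k : Fin m, u = Sum.inl (some k) ∧ v = Sum.inr k))

/-- `W` is a `c_Q`-visible set: `W ⊆ V \ Q`, every pair of vertices of `W` is
`Q`-visible, and `{u, w}` is `Q`-visible for all `u ∈ Q`, `w ∈ W`. -/
def CQVisible {V : Type*} (G : SimpleGraph V) (Q W : Set V) : Prop :=
  W ⊆ Qᶜ ∧ (∀ u ∈ W, ∀ v ∈ W, XVisible G Q u v) ∧ (∀ u ∈ Q, ∀ w ∈ W, XVisible G Q u w)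

/-- An absolute `c_Q`-visible set: a `c_Q`-visible set for which `Q` is moreover a
mutual-visibility set of `G`. -/
def AbsoluteCQVisible {V : Type*} (G : SimpleGraph V) (Q W : Set V) : Prop :=
  CQVisible G Q W ∧ MutualVisibilitySet G Q

/-!
The apex `c` is adjacent to every rim vertex, so two non-adjacent rim vertices are at distance
two, with `c` as a common neighbour. A set avoiding `c` is therefore always a mutual-visibility
set, which accounts for `(1 + x)^(m+n-2)`. A set `{c} ∪ T` is one iff any two non-adjacent
vertices of `T` have a common neighbour outside `T`. On two disjoint paths this forces `T` to be
empty, a single vertex, or two vertices at distance one or two along the same path (three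
vertices within distance two of each other contain the middle of the outer two); a path on `k`
vertices has `2k - 3` such pairs.
-/

open Finset

section Visibility

variable {V : Type*} {G : SimpleGraph V} {S : Set V} {u v w : V}

lemma xVisible_refl (u : V) : XVisible G S u u :=
  ⟨.nil, .nil, by simp, by simp⟩

lemma SimpleGraph.Adj.xVisible (h : G.Adj u v) : XVisible G S u v :=
  ⟨h.toWalk, by simp [h.ne], by simp [dist_eq_one_iff_adj.2 h], by simp⟩

lemma dist_eq_two_of_adj_of_adj (hne : u ≠ v) (hna : ¬G.Adj u v) (hu : G.Adj u w)
    (hv : G.Adj w v) : G.dist u v = 2 := by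
  have hr : G.Reachable u v := hu.reachable.trans hv.reachable
  have : G.edist u v = 2 :=
    edist_eq_two_iff.2 ⟨hne, hna, w, (G.mem_commonNeighbors).2 ⟨hu, hv.symm⟩⟩
  exact_mod_cast hr.coe_dist_eq_edist.trans this

lemma xVisible_iff_of_dist_eq_two (h : G.dist u v = 2) :
    XVisible G S u v ↔ ∃ w ∉ S, G.Adj u w ∧ G.Adj w v := by
  constructor
  · rintro ⟨p, -, hp, hS⟩
    rw [h] at hp
    have hu : G.Adj u (p.getVert 1) := by simpa using p.adj_getVert_succ (i := 0) (by omega)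
    have hv : G.Adj (p.getVert 1) v := by
      simpa [← hp, p.getVert_length] using p.adj_getVert_succ (i := 1) (by omega)
    refine ⟨p.getVert 1, fun hw => ?_, hu, hv⟩
    rcases hS _ (p.getVert_mem_support 1) hw with h | h
    · exact hu.ne h.symm
    · exact hv.ne h
  · rintro ⟨w, hw, hu, hv⟩
    have hne : u ≠ v := by rintro rfl; simp at h
    refine ⟨.cons hu (.cons hv .nil), by simp [hu.ne, hv.ne, hne], by simp [h], ?_⟩
    simp only [Walk.support_cons, Walk.support_nil, List.mem_cons, List.not_mem_nil, or_false]
    rintro x (rfl | rfl | rfl) hx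
    · exact .inl rfl
    · exact absurd hx hw
    · exact .inr rfl

end Visibility

def TwoPathVisible {W : Type*} (R : SimpleGraph W) (T : Set W) : Prop :=
  ∀ x ∈ T, ∀ y ∈ T, x ≠ y → ¬R.Adj x y → ∃ z ∉ T, R.Adj x z ∧ R.Adj z y

section TwoPathVisible

variable {W : Type*} {R : SimpleGraph W}

lemma Set.Subsingleton.twoPathVisible {T : Set W} (hT : T.Subsingleton) : TwoPathVisible R T :=
  fun _ hx _ hy hxy => absurd (hT hx hy) hxy

lemma TwoPathVisible.adj_or_exists_adj_adj {T : Set W} (hT : TwoPathVisible R T) {x y : W}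
    (hx : x ∈ T) (hy : y ∈ T) (hxy : x ≠ y) : R.Adj x y ∨ ∃ z, R.Adj x z ∧ R.Adj z y := by
  by_cases hadj : R.Adj x y
  · exact .inl hadj
  obtain ⟨z, -, hxz, hzy⟩ := hT x hx y hy hxy hadj
  exact .inr ⟨z, hxz, hzy⟩

lemma twoPathVisible_pair_iff {x y : W} (hxy : x ≠ y) :
    TwoPathVisible R {x, y} ↔ R.Adj x y ∨ ∃ z, R.Adj x z ∧ R.Adj z y := by
  refine ⟨fun hT => hT.adj_or_exists_adj_adj (by simp) (by simp) hxy, ?_⟩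
  intro h u hu v hv huv hna
  simp only [Set.mem_insert_iff, Set.mem_singleton_iff] at hu hv
  obtain ⟨rfl, rfl⟩ | ⟨rfl, rfl⟩ : u = x ∧ v = y ∨ u = y ∧ v = x := by
    rcases hu with rfl | rfl <;> rcases hv with rfl | rfl <;> simp_all
  · obtain ⟨z, hxz, hzy⟩ := h.resolve_left hna
    exact ⟨z, by simp [hxz.ne', hzy.ne], hxz, hzy⟩
  · obtain ⟨z, hxz, hzy⟩ := h.resolve_left fun hadj => hna hadj.symm
    exact ⟨z, by simp [hxz.ne', hzy.ne], hzy.symm, hxz.symm⟩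

end TwoPathVisible

section Cone

variable {W : Type*} {G : SimpleGraph (Option W)}

lemma dist_some_some_eq_two (hG : ∀ w, G.Adj none (some w)) {x y : W} (hxy : x ≠ y)
    (hna : ¬G.Adj (some x) (some y)) : G.dist (some x) (some y) = 2 :=
  dist_eq_two_of_adj_of_adj (by simpa using hxy) hna (hG x).symm (hG y)

lemma mutualVisibilitySet_of_none_notMem (hG : ∀ w, G.Adj none (some w))
    {S : Set (Option W)} (hS : none ∉ S) : MutualVisibilitySet G S := by
  rintro (_ | x) hx (_ | y) hy
  · exact absurd hx hS
  · exact absurd hx hS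
  · exact absurd hy hS
  by_cases hxy : x = y
  · exact hxy ▸ xVisible_refl _
  by_cases hadj : G.Adj (some x) (some y)
  · exact hadj.xVisible
  exact (xVisible_iff_of_dist_eq_two (dist_some_some_eq_two hG hxy hadj)).2
    ⟨none, hS, (hG x).symm, hG y⟩

lemma mutualVisibilitySet_insert_none_iff (hG : ∀ w, G.Adj none (some w)) (T : Set W) :
    MutualVisibilitySet G (insert none (some '' T)) ↔ TwoPathVisible (G.comap some) T := by
  constructor
  · intro hS x hx y hy hxy hna
    obtain ⟨_ | z, hz, hxz, hzy⟩ := (xVisible_iff_of_dist_eq_two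
      (dist_some_some_eq_two hG hxy hna)).1 (hS _ (by simp [hx]) _ (by simp [hy]))
    · simp at hz
    · exact ⟨z, by simpa using hz, hxz, hzy⟩
  · rintro hT (_ | x) hx (_ | y) hy
    · exact xVisible_refl _
    · exact (hG y).xVisible
    · exact (hG x).symm.xVisible
    by_cases hxy : x = y
    · exact hxy ▸ xVisible_refl _
    by_cases hadj : G.Adj (some x) (some y)
    · exact hadj.xVisible
    obtain ⟨z, hz, hxz, hzy⟩ := hT x (by simpa using hx) y (by simpa using hy) hxy hadj
    exact (xVisible_iff_of_dist_eq_two (dist_some_some_eq_two hG hxy hadj)).2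
      ⟨some z, by simpa using hz, hxz, hzy⟩

open Classical in
theorem visPoly_eq_of_forall_adj_none [Fintype W] (hG : ∀ w, G.Adj none (some w)) :
    visPoly G = (1 + X) ^ Fintype.card W +
      X * ∑ T ∈ univ.powerset.filter (fun T : Finset W => TwoPathVisible (G.comap some) T),
        X ^ #T := by
  have hinj : Set.InjOn (image (Function.Embedding.some (α := W))) (univ : Finset W).powerset :=
    (image_injective (Function.Embedding.some).injective).injOn
  rw [visPoly, sum_filter, sum_filter, mul_sum, univ_option, insertNone,
    OrderEmbedding.coe_ofMapLEIff, cons_eq_insert, sum_powerset_insert (by simp), map_eq_image,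
    powerset_image, sum_image hinj, sum_image hinj]
  congr 1
  · rw [← add_comm X, ← card_univ, ← sum_pow_mul_eq_add_pow]
    refine sum_congr rfl fun T _ => ?_
    rw [if_pos (mutualVisibilitySet_of_none_notMem hG (by simp)),
      card_image_of_injective _ (Function.Embedding.some).injective, one_pow, mul_one]
  · refine sum_congr rfl fun T _ => ?_
    rw [coe_insert, coe_image, Function.Embedding.some_apply,
      mutualVisibilitySet_insert_none_iff hG, card_insert_of_notMem (by simp),
      card_image_of_injective _ (Option.some_injective W)]
    split_ifs <;> ring

end Cone

section TwoPaths

variable {a b : ℕ}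

def pathIndex : Fin a ⊕ Fin b → ℕ := Sum.elim Fin.val Fin.val

lemma eq_iff_isLeft_pathIndex {x y : Fin a ⊕ Fin b} :
    x = y ↔ x.isLeft = y.isLeft ∧ pathIndex x = pathIndex y := by
  cases x <;> cases y <;> simp [pathIndex, Fin.ext_iff]

lemma exists_pathIndex_eq_add_one {x y : Fin a ⊕ Fin b} (hs : x.isLeft = y.isLeft)
    (h : pathIndex x < pathIndex y) :
    ∃ z : Fin a ⊕ Fin b, z.isLeft = x.isLeft ∧ pathIndex z = pathIndex x + 1 := by
  rcases x with i | i <;> rcases y with j | j <;> simp only [pathIndex, Sum.isLeft_inl,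
    Sum.isLeft_inr, reduceCtorEq, Sum.elim_inl, Sum.elim_inr] at hs h
  · exact ⟨.inl ⟨i + 1, by omega⟩, rfl, rfl⟩
  · exact ⟨.inr ⟨i + 1, by omega⟩, rfl, rfl⟩

lemma sum_pathGraph_adj_iff {x y : Fin a ⊕ Fin b} :
    (pathGraph a ⊕g pathGraph b).Adj x y ↔
      x.isLeft = y.isLeft ∧ (pathIndex x + 1 = pathIndex y ∨ pathIndex y + 1 = pathIndex x) := by
  cases x <;> cases y <;> simp [pathIndex, pathGraph_adj]

lemma sum_pathGraph_adj_or_exists_adj_adj_iff {x y : Fin a ⊕ Fin b} (hxy : x ≠ y) :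
    ((pathGraph a ⊕g pathGraph b).Adj x y ∨
      ∃ z, (pathGraph a ⊕g pathGraph b).Adj x z ∧ (pathGraph a ⊕g pathGraph b).Adj z y) ↔
      x.isLeft = y.isLeft ∧ pathIndex x ≤ pathIndex y + 2 ∧ pathIndex y ≤ pathIndex x + 2 := by
  simp only [sum_pathGraph_adj_iff]
  constructor
  · rintro (⟨hs, h⟩ | ⟨z, ⟨hs, h⟩, ⟨hs', h'⟩⟩)
    · exact ⟨hs, by omega, by omega⟩
    · exact ⟨hs.trans hs', by omega, by omega⟩
  · rintro ⟨hs, h, h'⟩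
    have hne : pathIndex x ≠ pathIndex y := fun e => hxy (eq_iff_isLeft_pathIndex.2 ⟨hs, e⟩)
    rcases (by omega : pathIndex x + 1 = pathIndex y ∨ pathIndex y + 1 = pathIndex x ∨
        pathIndex x + 2 = pathIndex y ∨ pathIndex y + 2 = pathIndex x) with h | h | h | h
    · exact .inl ⟨hs, .inl h⟩
    · exact .inl ⟨hs, .inr h⟩
    · obtain ⟨z, hz, hzi⟩ := exists_pathIndex_eq_add_one hs (by omega)
      exact .inr ⟨z, ⟨hz.symm, .inl hzi.symm⟩, ⟨hz.trans hs, .inl (by omega)⟩⟩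
    · obtain ⟨z, hz, hzi⟩ := exists_pathIndex_eq_add_one hs.symm (by omega)
      exact .inr ⟨z, ⟨hs.trans hz.symm, .inr (by omega)⟩, ⟨hz, .inr hzi.symm⟩⟩

lemma TwoPathVisible.notMem_of_two_mul_pathIndex {T : Set (Fin a ⊕ Fin b)}
    (hT : TwoPathVisible (pathGraph a ⊕g pathGraph b) T) {x y r : Fin a ⊕ Fin b}
    (hx : x ∈ T) (hy : y ∈ T) (hs : x.isLeft = y.isLeft)
    (hd : pathIndex x + 2 = pathIndex y ∨ pathIndex y + 2 = pathIndex x)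
    (hr : r.isLeft = x.isLeft) (hri : 2 * pathIndex r = pathIndex x + pathIndex y) : r ∉ T := by
  wlog h : pathIndex x + 2 = pathIndex y generalizing x y
  · exact this hy hx hs.symm hd.symm (hr.trans hs) (by omega) (hd.resolve_left h)
  obtain ⟨z, hz, hxz, hzy⟩ := hT x hx y hy (by rintro rfl; omega)
    (by rw [sum_pathGraph_adj_iff]; omega)
  rw [sum_pathGraph_adj_iff] at hxz hzy
  rwa [eq_iff_isLeft_pathIndex.2 ⟨hr.trans hxz.1, by omega⟩]

lemma TwoPathVisible.card_le_two {T : Finset (Fin a ⊕ Fin b)}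
    (hT : TwoPathVisible (pathGraph a ⊕g pathGraph b) T) : #T ≤ 2 := by
  by_contra! h
  obtain ⟨x, hx, y, hy, z, hz, hxy, hxz, hyz⟩ := two_lt_card.1 h
  have near {u v} (hu : u ∈ T) (hv : v ∈ T) (huv : u ≠ v) :=
    (sum_pathGraph_adj_or_exists_adj_adj_iff huv).1 (hT.adj_or_exists_adj_adj hu hv huv)
  obtain ⟨sxy, _⟩ := near hx hy hxy
  obtain ⟨sxz, _⟩ := near hx hz hxz
  obtain ⟨syz, _⟩ := near hy hz hyz
  have ixy : pathIndex x ≠ pathIndex y := fun e => hxy (eq_iff_isLeft_pathIndex.2 ⟨sxy, e⟩)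
  have ixz : pathIndex x ≠ pathIndex z := fun e => hxz (eq_iff_isLeft_pathIndex.2 ⟨sxz, e⟩)
  have iyz : pathIndex y ≠ pathIndex z := fun e => hyz (eq_iff_isLeft_pathIndex.2 ⟨syz, e⟩)
  rcases (by omega : (2 * pathIndex z = pathIndex x + pathIndex y ∧
      (pathIndex x + 2 = pathIndex y ∨ pathIndex y + 2 = pathIndex x)) ∨
    (2 * pathIndex y = pathIndex x + pathIndex z ∧
      (pathIndex x + 2 = pathIndex z ∨ pathIndex z + 2 = pathIndex x)) ∨
    (2 * pathIndex x = pathIndex y + pathIndex z ∧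
      (pathIndex y + 2 = pathIndex z ∨ pathIndex z + 2 = pathIndex y))) with
    ⟨hm, hd⟩ | ⟨hm, hd⟩ | ⟨hm, hd⟩
  · exact hT.notMem_of_two_mul_pathIndex hx hy sxy hd sxz.symm hm hz
  · exact hT.notMem_of_two_mul_pathIndex hx hz sxz hd sxy.symm hm hy
  · exact hT.notMem_of_two_mul_pathIndex hy hz syz hd sxy hm hx

lemma card_filter_lt_le_add_two (n : ℕ) :
    #{p : Fin n × Fin n | (p.1 : ℕ) < p.2 ∧ (p.2 : ℕ) ≤ p.1 + 2} = 2 * n - 3 := by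
  rw [← card_range (2 * n - 3)]
  refine card_bij' (fun p _ => 2 * p.1 + (p.2 - p.1 - 1))
    (fun k hk => (⟨k / 2, by simp at hk; omega⟩, ⟨k / 2 + 1 + k % 2, by simp at hk; omega⟩))
    ?_ ?_ ?_ ?_
  · intro p hp
    simp only [mem_filter, mem_univ, true_and, mem_range] at hp ⊢
    omega
  · intro k hk
    simp only [mem_filter, mem_univ, true_and, mem_range] at hk ⊢
    omega
  · intro p hp
    simp only [mem_filter, mem_univ, true_and] at hp
    ext <;> simp <;> omega
  · intro k _
    simp only
    omega

lemma card_filter_pathIndex_lt_le_add_two :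
    #{p : (Fin a ⊕ Fin b) × (Fin a ⊕ Fin b) | p.1.isLeft = p.2.isLeft ∧
      pathIndex p.1 < pathIndex p.2 ∧ pathIndex p.2 ≤ pathIndex p.1 + 2} =
      (2 * a - 3) + (2 * b - 3) := by
  rw [← card_filter_lt_le_add_two a, ← card_filter_lt_le_add_two b]
  simp only [card_filter, Fintype.sum_prod_type, Fintype.sum_sum_type]
  simp [pathIndex]

open Classical in
lemma card_filter_twoPathVisible_powersetCard_two :
    #((powersetCard 2 univ).filter
      (fun T : Finset (Fin a ⊕ Fin b) => TwoPathVisible (pathGraph a ⊕g pathGraph b) T)) =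
    #{p : (Fin a ⊕ Fin b) × (Fin a ⊕ Fin b) | p.1.isLeft = p.2.isLeft ∧
      pathIndex p.1 < pathIndex p.2 ∧ pathIndex p.2 ≤ pathIndex p.1 + 2} := by
  have pair_iff {x y : Fin a ⊕ Fin b} (hxy : x ≠ y) :=
    (twoPathVisible_pair_iff hxy).trans (sum_pathGraph_adj_or_exists_adj_adj_iff hxy)
  symm
  refine card_bij (fun p _ => {p.1, p.2}) ?_ ?_ ?_
  · rintro ⟨x, y⟩ hp
    simp only [mem_filter, mem_univ, true_and] at hp
    have hxy : x ≠ y := by rintro rfl; omega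
    simp only [mem_filter, mem_powersetCard, subset_univ, true_and, coe_pair]
    exact ⟨card_pair hxy, (pair_iff hxy).2 ⟨hp.1, by omega, by omega⟩⟩
  · rintro ⟨x, y⟩ hp ⟨x', y'⟩ hp' h
    simp only [mem_filter, mem_univ, true_and] at hp hp'
    rw [← coe_inj, coe_pair, coe_pair] at h
    rcases Set.pair_eq_pair_iff.1 h with ⟨rfl, rfl⟩ | ⟨rfl, rfl⟩
    · rfl
    · simp only at hp'
      omega
  · intro T hT
    simp only [mem_filter, mem_powersetCard, subset_univ, true_and, card_eq_two] at hT
    obtain ⟨⟨x, y, hxy, rfl⟩, hT⟩ := hT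
    rw [coe_pair, pair_iff hxy] at hT
    obtain ⟨hs, h1, h2⟩ := hT
    have hne : pathIndex x ≠ pathIndex y := fun e => hxy (eq_iff_isLeft_pathIndex.2 ⟨hs, e⟩)
    rcases hne.lt_or_gt with h | h
    · exact ⟨(x, y), by simp [hs, h, h2], rfl⟩
    · exact ⟨(y, x), by simp [hs, h, h1], pair_comm y x⟩

open Classical in
lemma sum_filter_twoPathVisible_sum_pathGraph (ha : 2 ≤ a) (hb : 2 ≤ b) :
    ∑ T ∈ univ.powerset.filter
        (fun T : Finset (Fin a ⊕ Fin b) => TwoPathVisible (pathGraph a ⊕g pathGraph b) T),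
      (X : ℕ[X]) ^ #T = 1 + C (a + b) * X + C (2 * a + 2 * b - 6) * X ^ 2 := by
  set F := univ.powerset.filter
    (fun T : Finset (Fin a ⊕ Fin b) => TwoPathVisible (pathGraph a ⊕g pathGraph b) T)
  have fiber (k : ℕ) : F.filter (#· = k) = (powersetCard k univ).filter
      (fun T : Finset (Fin a ⊕ Fin b) => TwoPathVisible (pathGraph a ⊕g pathGraph b) T) := by
    ext T
    simp only [F, mem_filter, mem_powerset, mem_powersetCard]
    tauto
  have small (k : ℕ) (hk : k ≤ 1) : (powersetCard k univ).filter
      (fun T : Finset (Fin a ⊕ Fin b) => TwoPathVisible (pathGraph a ⊕g pathGraph b) T) =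
      powersetCard k univ :=
    filter_true_of_mem fun T hT =>
      Set.Subsingleton.twoPathVisible (card_le_one.1 ((mem_powersetCard.1 hT).2.trans_le hk))
  rw [← sum_fiberwise_of_maps_to' (g := card) (t := range 3)
    fun T hT => mem_range.2 (Nat.lt_succ_of_le (mem_filter.1 hT).2.card_le_two)]
  simp only [sum_const, sum_range_succ, sum_range_zero, zero_add, fiber, small 0 zero_le_one,
    small 1 le_rfl, card_filter_twoPathVisible_powersetCard_two,
    card_filter_pathIndex_lt_le_add_two, card_powersetCard, card_univ, Fintype.card_sum,
    Fintype.card_fin]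
  rw [show 2 * a - 3 + (2 * b - 3) = 2 * a + 2 * b - 6 by omega]
  simp only [Nat.choose_zero_right, Nat.choose_one_right, pow_zero, pow_one, one_smul,
    nsmul_eq_mul]
  rw [← C_eq_natCast, ← C_eq_natCast, Nat.cast_id, Nat.cast_id]

end TwoPaths

lemma bowGraph_adj_none {a b : ℕ} (z : Fin a ⊕ Fin b) : (bowGraph a b).Adj none (some z) := by
  simp [bowGraph]

lemma comap_some_bowGraph (a b : ℕ) :
    (bowGraph a b).comap some = pathGraph a ⊕g pathGraph b := by
  ext (i | i) (j | j) <;> simp [bowGraph, pathGraph_adj] <;> simp only [Fin.ext_iff] <;> omega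

theorem visPoly_bowGraph {a b : ℕ} (ha : 2 ≤ a) (hb : 2 ≤ b) :
    visPoly (bowGraph a b) =
      (1 + X) ^ (a + b) + X + C (a + b) * X ^ 2 + C (2 * a + 2 * b - 6) * X ^ 3 := by
  rw [visPoly_eq_of_forall_adj_none bowGraph_adj_none, comap_some_bowGraph,
    sum_filter_twoPathVisible_sum_pathGraph ha hb, Fintype.card_sum, Fintype.card_fin,
    Fintype.card_fin]
  ring

theorem visPoly_bow (m n : ℕ) (hm : 3 ≤ m) (hn : 3 ≤ n) :
    visPoly (bowGraph (m - 1) (n - 1)) =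
      (1 + Polynomial.X) ^ (m + n - 2) + Polynomial.X +
        Polynomial.C (m + n - 2) * Polynomial.X ^ 2 +
        Polynomial.C (2 * m + 2 * n - 10) * Polynomial.X ^ 3 := by
  rw [visPoly_bowGraph (by omega) (by omega), show m - 1 + (n - 1) = m + n - 2 by omega,
    show 2 * (m - 1) + 2 * (n - 1) - 6 = 2 * m + 2 * n - 10 by omega]
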